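/- arXiv:1604.04206 — 3 statements merged into one kernel-verified Lean document; each statement's English description precedes it below -/
import Mathlib

section
/- For integers i ≥ 2 and l ≥ 2 with l ≤ 3^i, one has l ≤ 3^i, and if moreover 3^i < 9l/8, then any multiset of positive integer arities {a_1,...,a_h} with a_1·⋯·a_h ≥ l and sum a_1+⋯+a_h < 3i does not exist; that is, 3i is the minimal possible sum of arities whose product is at least l. -/
/-!
Every factor satisfies `a ^ 3 ≤ 3 ^ a`, so a list with sum `s` has product at most `3 ^ (s / 3)`.
If `s < 3 i` this gives `3 l ^ 3 ≤ (3 ^ i) ^ 3`, while cubing `8 · 3 ^ i < 9 l` gives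
`512 (3 ^ i) ^ 3 < 729 l ^ 3`; together these are incompatible since `3 · 512 > 729`.
-/

theorem cube_le_three_pow (a : ℕ) : a ^ 3 ≤ 3 ^ a := by
  induction a with
  | zero => norm_num
  | succ n ih =>
    rcases Nat.lt_or_ge n 3 with hn | hn
    · interval_cases n <;> norm_num
    · calc (n + 1) ^ 3 ≤ 3 * n ^ 3 := by
            nlinarith [Nat.mul_le_mul_right (n ^ 2) hn, Nat.mul_le_mul_right n hn]
        _ ≤ 3 * 3 ^ n := Nat.mul_le_mul_left 3 ih
        _ = 3 ^ (n + 1) := (pow_succ' 3 n).symm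

theorem List.prod_pow_three_le_three_pow_sum (as : List ℕ) : as.prod ^ 3 ≤ 3 ^ as.sum := by
  induction as with
  | nil => simp
  | cons a t ih =>
    rw [List.prod_cons, List.sum_cons, mul_pow, pow_add]
    exact Nat.mul_le_mul (cube_le_three_pow a) ih

theorem case1_sum_minimal_general (i l : ℕ) (h2 : 8 * 3 ^ i < 9 * l) :
    ¬ ∃ as : List ℕ, (∀ a ∈ as, 0 < a) ∧ l ≤ as.prod ∧ as.sum < 3 * i := by
  rintro ⟨as, -, hprod, hsum⟩
  have hupper : 3 * l ^ 3 ≤ (3 ^ i) ^ 3 :=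
    calc 3 * l ^ 3 ≤ 3 * 3 ^ as.sum := Nat.mul_le_mul_left 3 <|
          (Nat.pow_le_pow_left hprod 3).trans as.prod_pow_three_le_three_pow_sum
      _ = 3 ^ (as.sum + 1) := (pow_succ' 3 _).symm
      _ ≤ 3 ^ (3 * i) := Nat.pow_le_pow_right (by norm_num) hsum
      _ = (3 ^ i) ^ 3 := by ring
  have hlower : (8 * 3 ^ i) ^ 3 < (9 * l) ^ 3 := Nat.pow_lt_pow_left h2 (by norm_num)
  rw [mul_pow, mul_pow] at hlower
  omega

/-- Case 1 of Theorem 1: if `l ≤ 3^i < 9l/8` (with `i ≥ 2`, `l ≥ 2`), then no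
multiset of positive integer arities with product at least `l` has sum of
arities strictly smaller than `3i`; i.e. `3i` is the minimal possible sum. -/
theorem case1_sum_minimal (i l : ℕ) (hi : 2 ≤ i) (hl : 2 ≤ l)
    (h1 : l ≤ 3 ^ i) (h2 : 8 * 3 ^ i < 9 * l) :
    ¬ ∃ as : List ℕ, (∀ a ∈ as, 0 < a) ∧ l ≤ as.prod ∧ as.sum < 3 * i :=
  case1_sum_minimal_general i l h2
end

section
/- In each of the eleven cases of Theorem 1, the prescribed multiset of arities (h_5 fives, h_4 fours, h_3 threes, h_2 twos) covers the message: 5^{h_5}·4^{h_4}·3^{h_3}·2^{h_2} ≥ l. -/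
/-! In every case but the first, the case condition contains an upper bound
`3 ^ k * l ≤ c * 3 ^ i` (sometimes in a stronger form), where `k = i - h₃` is the number of
threes traded for the factor `c = 5^h₅ · 4^h₄ · 2^h₂`; dividing by `3 ^ k` gives the claim.
The first case is `l ≤ 3 ^ i`. -/

/-- The eleven case conditions of Theorem 1, with the rational inequalities
(e.g. `3^i < 9l/8`) written in cross-multiplied integer form. -/
def conds (l i : ℕ) : Fin 11 → Prop := fun k =>
  match k with
  | 0 => (l ≤ 3 ^ i ∧ 8 * 3 ^ i < 9 * l) ∨ (i < 2 ∧ 2 * 3 ^ i < 3 * l)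
  | 1 => (9 * l ≤ 8 * 3 ^ i ∧ 64 * 3 ^ i < 81 * l ∧ 2 ≤ i) ∨
      (2 ≤ i ∧ i < 4 ∧ 81 * l < 64 * 3 ^ i ∧ 20 * 3 ^ i < 27 * l)
  | 2 => 81 * l ≤ 64 * 3 ^ i ∧ 20 * 3 ^ i < 27 * l ∧ 4 ≤ i
  | 3 => 27 * l ≤ 20 * 3 ^ i ∧ 2 * 3 ^ i < 3 * l ∧ 3 ≤ i
  | 4 => (3 * l ≤ 2 * 3 ^ i ∧ 16 * 3 ^ i < 27 * l ∧ 1 ≤ i) ∨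
      (3 * l ≤ 2 * 3 ^ i ∧ 5 * 3 ^ i < 9 * l ∧ i < 3) ∨
      (9 * l ≤ 5 * 3 ^ i ∧ 4 * 3 ^ i < 9 * l ∧ i < 2)
  | 5 => 27 * l ≤ 16 * 3 ^ i ∧ 5 * 3 ^ i < 9 * l ∧ 3 ≤ i
  | 6 => (9 * l ≤ 5 * 3 ^ i ∧ 40 * 3 ^ i < 81 * l ∧ 2 ≤ i) ∨
      (81 * l ≤ 40 * 3 ^ i ∧ 4 * 3 ^ i < 9 * l ∧ 2 ≤ i ∧ i ≤ 3)
  | 7 => 81 * l ≤ 40 * 3 ^ i ∧ 4 * 3 ^ i < 9 * l ∧ 4 ≤ i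
  | 8 => (9 * l ≤ 4 * 3 ^ i ∧ 32 * 3 ^ i < 81 * l ∧ 2 ≤ i) ∨
      (81 * l ≤ 32 * 3 ^ i ∧ 3 ^ i < 3 * l ∧ i = 2) ∨
      (81 * l ≤ 32 * 3 ^ i ∧ 10 * 3 ^ i < 27 * l ∧ i < 4)
  | 9 => 81 * l ≤ 32 * 3 ^ i ∧ 10 * 3 ^ i < 27 * l ∧ 4 ≤ i
  | 10 => 27 * l ≤ 10 * 3 ^ i ∧ 3 ^ i < 3 * l ∧ 3 ≤ i

-- For `i < k` the exponent `i - k` truncates to `0`; the bound `l ≤ c` then still holds.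
theorem Nat.le_mul_pow_sub_of_pow_mul_le {b c k i l : ℕ} (hb : 0 < b)
    (h : b ^ k * l ≤ c * b ^ i) : l ≤ c * b ^ (i - k) := by
  have hbk : 0 < b ^ k := pow_pos hb k
  rcases le_or_gt k i with hki | hik
  · rw [← Nat.pow_sub_mul_pow b hki, ← mul_assoc, mul_comm _ (b ^ k)] at h
    exact le_of_mul_le_mul_left h hbk
  · have hpow : b ^ i ≤ b ^ k := Nat.pow_le_pow_right hb hik.le
    rw [Nat.sub_eq_zero_of_le hik.le, pow_zero, mul_one]
    refine le_of_mul_le_mul_left ?_ hbk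
    calc b ^ k * l ≤ c * b ^ i := h
      _ ≤ c * b ^ k := Nat.mul_le_mul_left c hpow
      _ = b ^ k * c := mul_comm _ _

theorem eleven_cases_cover_general (l i : ℕ)
    (hi : l ≤ 3 ^ i) :
    (conds l i 0 → l ≤ 3 ^ i) ∧
    (conds l i 1 → l ≤ 4 * 3 ^ (i - 2) * 2) ∧
    (conds l i 2 → l ≤ 4 ^ 3 * 3 ^ (i - 4)) ∧
    (conds l i 3 → l ≤ 5 * 4 * 3 ^ (i - 3)) ∧
    (conds l i 4 → l ≤ 3 ^ (i - 1) * 2) ∧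
    (conds l i 5 → l ≤ 4 ^ 2 * 3 ^ (i - 3)) ∧
    (conds l i 6 → l ≤ 5 * 3 ^ (i - 2)) ∧
    (conds l i 7 → l ≤ 5 * 4 * 3 ^ (i - 4) * 2) ∧
    (conds l i 8 → l ≤ 4 * 3 ^ (i - 2)) ∧
    (conds l i 9 → l ≤ 4 ^ 2 * 3 ^ (i - 4) * 2) ∧
    (conds l i 10 → l ≤ 5 * 3 ^ (i - 3) * 2) := by
  have cover {k c : ℕ} (h : 3 ^ k * l ≤ c * 3 ^ i) : l ≤ c * 3 ^ (i - k) :=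
    Nat.le_mul_pow_sub_of_pow_mul_le three_pos h
  refine ⟨fun _ => hi, fun h => ?_, fun h => ?_, fun h => ?_, fun h => ?_, fun h => ?_,
    fun h => ?_, fun h => ?_, fun h => ?_, fun h => ?_, fun h => ?_⟩
  · have := cover (k := 2) (c := 8) (by rcases h with ⟨h, -⟩ | ⟨-, -, h, -⟩ <;> omega); omega
  · have := cover (k := 4) (c := 64) (by obtain ⟨h, -⟩ := h; omega); omega
  · have := cover (k := 3) (c := 20) (by obtain ⟨h, -⟩ := h; omega); omega
  · have := cover (k := 1) (c := 2) (by rcases h with ⟨h, -⟩ | ⟨h, -⟩ | ⟨h, -⟩ <;> omega); omega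
  · have := cover (k := 3) (c := 16) (by obtain ⟨h, -⟩ := h; omega); omega
  · have := cover (k := 2) (c := 5) (by rcases h with ⟨h, -⟩ | ⟨h, -⟩ <;> omega); omega
  · have := cover (k := 4) (c := 40) (by obtain ⟨h, -⟩ := h; omega); omega
  · have := cover (k := 2) (c := 4) (by rcases h with ⟨h, -⟩ | ⟨h, -⟩ | ⟨h, -⟩ <;> omega); omega
  · have := cover (k := 4) (c := 32) (by obtain ⟨h, -⟩ := h; omega); omega
  · have := cover (k := 3) (c := 10) (by obtain ⟨h, -⟩ := h; omega); omega

/-- In each of the eleven cases of Theorem 1, the prescribed multiset of arities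
(`h₅` fives, `h₄` fours, `h₃` threes, `h₂` twos) covers the message:
`5^h₅ · 4^h₄ · 3^h₃ · 2^h₂ ≥ l`. -/
theorem eleven_cases_cover (l i : ℕ) (hl : 2 ≤ l)
    (hi : l ≤ 3 ^ i) (hmin : ∀ j : ℕ, l ≤ 3 ^ j → i ≤ j) :
    (conds l i 0 → l ≤ 3 ^ i) ∧
    (conds l i 1 → l ≤ 4 * 3 ^ (i - 2) * 2) ∧
    (conds l i 2 → l ≤ 4 ^ 3 * 3 ^ (i - 4)) ∧
    (conds l i 3 → l ≤ 5 * 4 * 3 ^ (i - 3)) ∧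
    (conds l i 4 → l ≤ 3 ^ (i - 1) * 2) ∧
    (conds l i 5 → l ≤ 4 ^ 2 * 3 ^ (i - 3)) ∧
    (conds l i 6 → l ≤ 5 * 3 ^ (i - 2)) ∧
    (conds l i 7 → l ≤ 5 * 4 * 3 ^ (i - 4) * 2) ∧
    (conds l i 8 → l ≤ 4 * 3 ^ (i - 2)) ∧
    (conds l i 9 → l ≤ 4 ^ 2 * 3 ^ (i - 4) * 2) ∧
    (conds l i 10 → l ≤ 5 * 3 ^ (i - 3) * 2) :=
  eleven_cases_cover_general l i hi
end

section
/- In each of the eleven cases of Theorem 1, the solution satisfies the necessary minimality constraints: the product of all arities is at least l, and the product divided by any single arity is strictly less than l. -/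
/-!
Minimality of `i` means `3 ^ (i - 1) < l`, i.e. `3 ^ i < 3 * l`. In every case the product is
`c * 3 ^ (i - k)` with `c ≤ 3 ^ k`, hence at most `3 ^ i`, so dropping an arity `3` always leaves
less than `l`; the remaining claims are the case conditions divided by `3 ^ k`. For `i ≥ 4` every
`3 ^ (i - k)` is a multiple of `3 ^ (i - 4)`, so all claims are linear inequalities in `l` and
`3 ^ (i - 4)`; for `i < 4` all powers are numerals.
-/

theorem pow_lt_mul_of_minimal {b l i : ℕ} (hb : 1 < b) (hl : 1 ≤ l)
    (hmin : ∀ j : ℕ, l ≤ b ^ j → i ≤ j) : b ^ i < b * l := by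
  cases i with
  | zero => simpa using Nat.lt_of_lt_of_le hb (Nat.le_mul_of_pos_right b hl)
  | succ n =>
    have hn : b ^ n < l := Nat.lt_of_not_le fun h => by simpa using hmin n h
    rw [pow_succ']
    exact Nat.mul_lt_mul_of_pos_left hn (by omega)

theorem pow_sub_eq_pow_sub_mul_pow_sub {M : Type*} [Monoid M] (a : M) {i k m : ℕ} (hk : k ≤ m)
    (hm : m ≤ i) : a ^ (i - k) = a ^ (m - k) * a ^ (i - m) := by
  rw [← pow_add]; congr 1; omega

/-- In each of the eleven cases of Theorem 1, the prescribed arities satisfy the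
minimality constraints: the product `P = 5^h₅·4^h₄·3^h₃·2^h₂` is at least `l`,
and `P/a < l` (i.e. `P < a·l`) for each arity `a` occurring in the multiset. -/
theorem eleven_cases_minimality (l i : ℕ) (hl : 2 ≤ l)
    (hi : l ≤ 3 ^ i) (hmin : ∀ j : ℕ, l ≤ 3 ^ j → i ≤ j) :
    (conds l i 0 → l ≤ 3 ^ i ∧ 3 ^ i < 3 * l) ∧
    (conds l i 1 → l ≤ 2 * 4 * 3 ^ (i - 2) ∧ 2 * 4 * 3 ^ (i - 2) < 2 * l ∧
      2 * 4 * 3 ^ (i - 2) < 4 * l ∧ (2 < i → 2 * 4 * 3 ^ (i - 2) < 3 * l)) ∧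
    (conds l i 2 → l ≤ 4 ^ 3 * 3 ^ (i - 4) ∧ 4 ^ 3 * 3 ^ (i - 4) < 4 * l ∧
      (4 < i → 4 ^ 3 * 3 ^ (i - 4) < 3 * l)) ∧
    (conds l i 3 → l ≤ 5 * 4 * 3 ^ (i - 3) ∧ 5 * 4 * 3 ^ (i - 3) < 5 * l ∧
      5 * 4 * 3 ^ (i - 3) < 4 * l ∧ (3 < i → 5 * 4 * 3 ^ (i - 3) < 3 * l)) ∧
    (conds l i 4 → l ≤ 2 * 3 ^ (i - 1) ∧ 2 * 3 ^ (i - 1) < 2 * l ∧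
      (1 < i → 2 * 3 ^ (i - 1) < 3 * l)) ∧
    (conds l i 5 → l ≤ 4 ^ 2 * 3 ^ (i - 3) ∧ 4 ^ 2 * 3 ^ (i - 3) < 4 * l ∧
      (3 < i → 4 ^ 2 * 3 ^ (i - 3) < 3 * l)) ∧
    (conds l i 6 → l ≤ 5 * 3 ^ (i - 2) ∧ 5 * 3 ^ (i - 2) < 5 * l ∧
      (2 < i → 5 * 3 ^ (i - 2) < 3 * l)) ∧
    (conds l i 7 → l ≤ 2 * 5 * 4 * 3 ^ (i - 4) ∧ 2 * 5 * 4 * 3 ^ (i - 4) < 5 * l ∧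
      2 * 5 * 4 * 3 ^ (i - 4) < 4 * l ∧ 2 * 5 * 4 * 3 ^ (i - 4) < 2 * l ∧
      (4 < i → 2 * 5 * 4 * 3 ^ (i - 4) < 3 * l)) ∧
    (conds l i 8 → l ≤ 4 * 3 ^ (i - 2) ∧ 4 * 3 ^ (i - 2) < 4 * l ∧
      (2 < i → 4 * 3 ^ (i - 2) < 3 * l)) ∧
    (conds l i 9 → l ≤ 2 * 4 ^ 2 * 3 ^ (i - 4) ∧ 2 * 4 ^ 2 * 3 ^ (i - 4) < 4 * l ∧
      2 * 4 ^ 2 * 3 ^ (i - 4) < 2 * l ∧ (4 < i → 2 * 4 ^ 2 * 3 ^ (i - 4) < 3 * l)) ∧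
    (conds l i 10 → l ≤ 2 * 5 * 3 ^ (i - 3) ∧ 2 * 5 * 3 ^ (i - 3) < 5 * l ∧
      2 * 5 * 3 ^ (i - 3) < 2 * l ∧ (3 < i → 2 * 5 * 3 ^ (i - 3) < 3 * l)) := by
  have h3 : 3 ^ i < 3 * l := pow_lt_mul_of_minimal (by norm_num) (by omega) hmin
  simp only [conds]
  rcases Nat.lt_or_ge i 4 with hsmall | hlarge
  · interval_cases i <;> omega
  · have e0 := pow_sub_eq_pow_sub_mul_pow_sub 3 (k := 0) (by norm_num) hlarge
    have e1 := pow_sub_eq_pow_sub_mul_pow_sub 3 (k := 1) (by norm_num) hlarge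
    have e2 := pow_sub_eq_pow_sub_mul_pow_sub 3 (k := 2) (by norm_num) hlarge
    have e3 := pow_sub_eq_pow_sub_mul_pow_sub 3 (k := 3) (by norm_num) hlarge
    norm_num at e0 e1 e2 e3
    omega
end
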